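/- arXiv:1712.04497 — 5 statements merged into one kernel-verified Lean document; each statement's English description precedes it below -/
import Mathlib

section
/- Let h be an invertible p×p complex Hermitian matrix all of whose leading principal minors are nonzero. Then there exist a unique p×p complex lower triangular matrix s with positive real diagonal entries and a unique diagonal matrix ε = diag(ε_1,…,ε_p) with each ε_i = ±1 such that h = s ε s*. -/
/-
Existence: induction on `p` by bordering. Write `h = [[h₀, b], [bᴴ, c]]` and factor
`h₀ = s₀ ε₀ s₀ᴴ`. Solving `s₀ ε₀ w̄ = b` gives `h = S diag(ε₀, e) Sᴴ` for `S = [[s₀, 0], [w, t]]`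
as soon as `t e t̄ = r := c - w ε₀ wᴴ`. The Schur complement `r` is real, and nonzero since
`det h ≠ 0`, so `t = √|r|` and `e = sign r` work.

Uniqueness: if `s ε sᴴ = s' ε' s'ᴴ`, then `s'⁻¹ s ε = ε' s'ᴴ (sᴴ)⁻¹` is both lower and upper
triangular, hence diagonal; comparing diagonal entries of positive real `s i i`, `s' i i`
forces `ε = ε'` and then `s = s'`.
-/

open Matrix

/-- `s` is lower triangular with positive real diagonal entries. -/
def LowerPos {p : ℕ} (s : Matrix (Fin p) (Fin p) ℂ) : Prop :=
  (∀ i j : Fin p, i < j → s i j = 0) ∧ ∀ i : Fin p, 0 < (s i i).re ∧ (s i i).im = 0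

section Sign

variable {e : ℂ}

theorem star_eq_self_of_sign (he : e = 1 ∨ e = -1) : star e = e := by
  rcases he with rfl | rfl <;> simp

theorem mul_self_eq_one_of_sign (he : e = 1 ∨ e = -1) : e * e = 1 := by
  rcases he with rfl | rfl <;> simp

end Sign

theorem eq_and_eq_of_sq_mul_sign_eq {a b : ℝ} (ha : 0 < a) (hb : 0 < b) {e e' : ℂ}
    (he : e = 1 ∨ e = -1) (he' : e' = 1 ∨ e' = -1)
    (h : ((a ^ 2 : ℝ) : ℂ) * e = ((b ^ 2 : ℝ) : ℂ) * e') : a = b ∧ e = e' := by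
  rcases he with rfl | rfl <;> rcases he' with rfl | rfl <;>
    simp only [mul_one, mul_neg, neg_inj, ← Complex.ofReal_neg, Complex.ofReal_inj] at h
  · exact ⟨(pow_left_inj₀ ha.le hb.le two_ne_zero).1 h, rfl⟩
  · nlinarith
  · nlinarith
  · exact ⟨(pow_left_inj₀ ha.le hb.le two_ne_zero).1 h, rfl⟩

theorem Complex.exists_pos_mul_sign_mul_star_eq {r : ℂ} (hr : star r = r) (hr0 : r ≠ 0) :
    ∃ t e : ℂ, (0 < t.re ∧ t.im = 0) ∧ (e = 1 ∨ e = -1) ∧ t * e * star t = r := by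
  obtain ⟨x, rfl⟩ := Complex.conj_eq_iff_real.1 hr
  have hx : x ≠ 0 := by exact_mod_cast hr0
  rcases hx.lt_or_gt with hx | hx
  · refine ⟨Real.sqrt (-x), -1, by simpa using hx, Or.inr rfl, ?_⟩
    have hsq : (Real.sqrt (-x) : ℂ) * Real.sqrt (-x) = -x := by
      exact_mod_cast Real.mul_self_sqrt (neg_nonneg.2 hx.le)
    rw [Complex.star_def, Complex.conj_ofReal]
    linear_combination -hsq
  · refine ⟨Real.sqrt x, 1, by simpa using hx, Or.inl rfl, ?_⟩
    have hsq : (Real.sqrt x : ℂ) * Real.sqrt x = x := by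
      exact_mod_cast Real.mul_self_sqrt hx.le
    rw [Complex.star_def, Complex.conj_ofReal]
    linear_combination hsq

namespace Matrix

variable {n α : Type*}

theorem IsLowerTriangular.conjTranspose [AddMonoid α] [StarAddMonoid α] [LinearOrder n]
    {M : Matrix n n α} (hM : M.IsLowerTriangular) : Mᴴ.IsUpperTriangular := fun i j hij => by
  simp [conjTranspose_apply, hM (show OrderDual.toDual i < OrderDual.toDual j from hij)]

theorem IsLowerTriangular.eq_diagonal_of_isUpperTriangular [Zero α] [DecidableEq n]
    [LinearOrder n] {M : Matrix n n α} (hl : M.IsLowerTriangular) (hu : M.IsUpperTriangular) :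
    M = diagonal M.diag := by
  ext i j
  rcases lt_trichotomy i j with hij | rfl | hij
  · simp [hl (show OrderDual.toDual j < OrderDual.toDual i from hij), hij.ne]
  · simp
  · simp [hu hij, hij.ne']

theorem IsHermitian.ext_of_castSucc [Star α] {p : ℕ}
    {M N : Matrix (Fin (p + 1)) (Fin (p + 1)) α}
    (hM : M.IsHermitian) (hN : N.IsHermitian)
    (hblock : ∀ i j : Fin p, M i.castSucc j.castSucc = N i.castSucc j.castSucc)
    (hcol : ∀ i : Fin p, M i.castSucc (Fin.last p) = N i.castSucc (Fin.last p))
    (hcorner : M (Fin.last p) (Fin.last p) = N (Fin.last p) (Fin.last p)) : M = N := by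
  ext i j
  induction i using Fin.lastCases <;> induction j using Fin.lastCases
  · exact hcorner
  · rw [← hM.apply, ← hN.apply, hcol]
  · exact hcol _
  · exact hblock _ _

theorem mul_diagonal_mul_conjTranspose_apply [Fintype n] [DecidableEq n] [CommSemiring α]
    [StarRing α] (s : Matrix n n α) (d : n → α) (i j : n) :
    (s * diagonal d * sᴴ) i j = ∑ k, s i k * d k * star (s j k) := by
  rw [mul_apply]
  simp only [mul_diagonal, conjTranspose_apply]

theorem IsLowerTriangular.exists_diagonal_of_mul_diagonal_mul_conjTranspose_eq [Fintype n]
    [DecidableEq n] [LinearOrder n] [Field α] [StarRing α] {s s' : Matrix n n α}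
    (hs : s.IsLowerTriangular) (hs' : s'.IsLowerTriangular) (hsu : IsUnit s.det)
    (hsu' : IsUnit s'.det) {d d' : n → α}
    (heq : s * diagonal d * sᴴ = s' * diagonal d' * s'ᴴ) :
    ∃ x, s * diagonal d = s' * diagonal x ∧ diagonal d' * s'ᴴ = diagonal x * sᴴ := by
  have hsHu : IsUnit sᴴ.det := by rw [det_conjTranspose]; exact hsu.star
  let _ := invertibleOfIsUnitDet s' hsu'
  let _ := invertibleOfIsUnitDet sᴴ hsHu
  set X := s'⁻¹ * (s * diagonal d)
  have hX : X = diagonal d' * s'ᴴ * sᴴ⁻¹ := by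
    calc X = s'⁻¹ * (s * diagonal d * sᴴ) * sᴴ⁻¹ := by
          simp only [X, Matrix.mul_assoc, mul_inv_of_invertible, Matrix.mul_one]
      _ = diagonal d' * s'ᴴ * sᴴ⁻¹ := by
          rw [heq]
          simp only [← Matrix.mul_assoc, inv_mul_of_invertible, Matrix.one_mul]
  have hXl : X.IsLowerTriangular :=
    (blockTriangular_inv_of_blockTriangular hs').mul (hs.mul (blockTriangular_diagonal d))
  have hXu : X.IsUpperTriangular := hX ▸
    ((blockTriangular_diagonal d').mul (IsLowerTriangular.conjTranspose hs')).mul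
      (blockTriangular_inv_of_blockTriangular (IsLowerTriangular.conjTranspose hs))
  refine ⟨X.diag, ?_, ?_⟩ <;>
    rw [← IsLowerTriangular.eq_diagonal_of_isUpperTriangular hXl hXu]
  · exact (mul_inv_cancel_left_of_invertible s' _).symm
  · rw [hX, inv_mul_cancel_right_of_invertible]

end Matrix

namespace LowerPos

variable {p : ℕ} {s s' : Matrix (Fin p) (Fin p) ℂ}

theorem isLowerTriangular (hs : LowerPos s) : s.IsLowerTriangular := fun i j hij => hs.1 i j hij

theorem apply_self (hs : LowerPos s) (i : Fin p) : s i i = ((s i i).re : ℂ) :=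
  Complex.ext rfl (hs.2 i).2

theorem isUnit_det (hs : LowerPos s) : IsUnit s.det := by
  rw [det_of_isLowerTriangular s hs.isLowerTriangular, isUnit_iff_ne_zero,
    Finset.prod_ne_zero_iff]
  exact fun i _ h0 => (hs.2 i).1.ne' (by simp [h0])

theorem eq_of_mul_diagonal_mul_conjTranspose_eq (hs : LowerPos s) (hs' : LowerPos s')
    {ε ε' : Fin p → ℂ} (hε : ∀ i, ε i = 1 ∨ ε i = -1) (hε' : ∀ i, ε' i = 1 ∨ ε' i = -1)
    (heq : s * diagonal ε * sᴴ = s' * diagonal ε' * s'ᴴ) : s = s' ∧ ε = ε' := by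
  obtain ⟨x, h₁, h₂⟩ := IsLowerTriangular.exists_diagonal_of_mul_diagonal_mul_conjTranspose_eq
    hs.isLowerTriangular hs'.isLowerTriangular hs.isUnit_det hs'.isUnit_det heq
  have hdiag : ∀ i, ε i = ε' i ∧ x i = ε i := fun i => by
    have e₁ := congrFun₂ h₁ i i
    have e₂ := congrFun₂ h₂ i i
    simp only [mul_diagonal, diagonal_mul, conjTranspose_apply] at e₁ e₂
    rw [hs.apply_self, hs'.apply_self] at e₁ e₂
    rw [Complex.star_def, Complex.conj_ofReal, Complex.conj_ofReal] at e₂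
    obtain ⟨hab, hee'⟩ := eq_and_eq_of_sq_mul_sign_eq (hs.2 i).1 (hs'.2 i).1 (hε i) (hε' i)
      (by push_cast; linear_combination ((s i i).re : ℂ) * e₁ - ((s' i i).re : ℂ) * e₂)
    rw [hab] at e₁
    exact ⟨hee',
      (mul_left_cancel₀ (Complex.ofReal_ne_zero.2 (hs'.2 i).1.ne') e₁).symm⟩
  have hεε : diagonal ε * diagonal ε = 1 := by
    rw [diagonal_mul_diagonal, ← diagonal_one]
    exact congrArg diagonal (funext fun i => mul_self_eq_one_of_sign (hε i))
  have hx : x = ε := funext fun i => (hdiag i).2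
  refine ⟨?_, funext fun i => (hdiag i).1⟩
  rw [← Matrix.mul_one s, ← Matrix.mul_one s', ← hεε, ← Matrix.mul_assoc, h₁, hx,
    Matrix.mul_assoc]

end LowerPos

section Border

variable {α : Type*} {p : ℕ}

/-- The matrix `[[s₀, 0], [w, t]]`. -/
def borderLower [Zero α] (s₀ : Matrix (Fin p) (Fin p) α) (w : Fin p → α) (t : α) :
    Matrix (Fin (p + 1)) (Fin (p + 1)) α :=
  of (Fin.snoc (fun i => Fin.snoc (s₀ i) 0) (Fin.snoc w t))

section Entries

variable [Zero α] (s₀ : Matrix (Fin p) (Fin p) α) (w : Fin p → α) (t : α)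

@[simp]
theorem borderLower_castSucc_castSucc (i j : Fin p) :
    borderLower s₀ w t i.castSucc j.castSucc = s₀ i j := by
  simp [borderLower]

@[simp]
theorem borderLower_castSucc_last (i : Fin p) :
    borderLower s₀ w t i.castSucc (Fin.last p) = 0 := by
  simp [borderLower]

@[simp]
theorem borderLower_last_castSucc (j : Fin p) :
    borderLower s₀ w t (Fin.last p) j.castSucc = w j := by
  simp [borderLower]

@[simp]
theorem borderLower_last_last : borderLower s₀ w t (Fin.last p) (Fin.last p) = t := by
  simp [borderLower]

end Entries

theorem LowerPos.borderLower {s₀ : Matrix (Fin p) (Fin p) ℂ} (hs₀ : LowerPos s₀)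
    (w : Fin p → ℂ) {t : ℂ} (ht : 0 < t.re ∧ t.im = 0) : LowerPos (borderLower s₀ w t) := by
  refine ⟨fun i j hij => ?_, fun i => ?_⟩
  · induction j using Fin.lastCases with
    | last =>
      induction i using Fin.lastCases with
      | last => exact absurd hij (lt_irrefl _)
      | cast i => simp
    | cast j =>
      induction i using Fin.lastCases with
      | last => exact absurd hij (Fin.castSucc_lt_last j).not_gt
      | cast i => simpa using hs₀.1 i j (Fin.castSucc_lt_castSucc_iff.1 hij)
  · induction i using Fin.lastCases with
    | last => simpa using ht
    | cast i => simpa using hs₀.2 i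

theorem Matrix.IsHermitian.eq_borderLower_mul_diagonal_mul_conjTranspose [CommSemiring α]
    [StarRing α] {h : Matrix (Fin (p + 1)) (Fin (p + 1)) α} (hh : h.IsHermitian)
    {s₀ : Matrix (Fin p) (Fin p) α} {d : Fin p → α} {w : Fin p → α} {t e : α}
    (hd : star d = d) (he : star e = e)
    (hblock : h.submatrix Fin.castSucc Fin.castSucc = s₀ * diagonal d * s₀ᴴ)
    (hcol : ∀ i, h i.castSucc (Fin.last p) = ∑ k, s₀ i k * d k * star (w k))
    (hcorner : h (Fin.last p) (Fin.last p) = ∑ k, w k * d k * star (w k) + t * e * star t) :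
    h = borderLower s₀ w t * diagonal (Fin.snoc d e) * (borderLower s₀ w t)ᴴ := by
  have hde : IsSelfAdjoint (Fin.snoc d e : Fin (p + 1) → α) := by
    funext i
    induction i using Fin.lastCases with
    | last => simpa using he
    | cast i => simpa using congrFun hd i
  refine hh.ext_of_castSucc (isHermitian_mul_mul_conjTranspose _
    (isHermitian_diagonal_of_self_adjoint _ hde)) (fun i j => ?_) (fun i => ?_) ?_ <;>
    simp only [mul_diagonal_mul_conjTranspose_apply, Fin.sum_univ_castSucc]
  · simpa [mul_diagonal_mul_conjTranspose_apply] using congrFun₂ hblock i j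
  · simp [hcol]
  · simp [hcorner]

end Border

theorem exists_lowerPos_mul_diagonal_mul_conjTranspose_eq :
    ∀ {p : ℕ} {h : Matrix (Fin p) (Fin p) ℂ}, h.IsHermitian →
      (∀ (k : ℕ) (hk : k ≤ p), (h.submatrix (Fin.castLE hk) (Fin.castLE hk)).det ≠ 0) →
      ∃ (s : Matrix (Fin p) (Fin p) ℂ) (ε : Fin p → ℂ),
        LowerPos s ∧ (∀ i, ε i = 1 ∨ ε i = -1) ∧ h = s * diagonal ε * sᴴ
  | 0, h, _, _ => ⟨1, 1, ⟨finZeroElim, finZeroElim⟩, finZeroElim, Subsingleton.elim _ _⟩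
  | p + 1, h, hh, hminors => by
    obtain ⟨s₀, ε₀, hs₀, hε₀, hfac₀⟩ := exists_lowerPos_mul_diagonal_mul_conjTranspose_eq
      (hh.submatrix Fin.castSucc) fun k hk => hminors k (hk.trans p.le_succ)
    have hε₀star : star ε₀ = ε₀ := funext fun i => star_eq_self_of_sign (hε₀ i)
    have hA : IsUnit (s₀ * diagonal ε₀) := by
      rw [isUnit_iff_isUnit_det, det_mul, det_diagonal]
      exact hs₀.isUnit_det.mul <| isUnit_iff_ne_zero.2 <| Finset.prod_ne_zero_iff.2 fun i _ =>
        left_ne_zero_of_mul_eq_one (mul_self_eq_one_of_sign (hε₀ i))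
    obtain ⟨u, hu⟩ := mulVec_surjective_iff_isUnit.2 hA fun i => h i.castSucc (Fin.last p)
    set w := star u
    have hcol : ∀ i, h i.castSucc (Fin.last p) = ∑ k, s₀ i k * ε₀ k * star (w k) := fun i => by
      simp [w, ← congrFun hu i, mulVec, dotProduct]
    set r := h (Fin.last p) (Fin.last p) - ∑ k, w k * ε₀ k * star (w k)
    have hr : star r = r := by
      have hε₀k : ∀ k, star (ε₀ k) = ε₀ k := congrFun hε₀star
      simp only [r, star_sub, hh.apply, star_sum, star_mul', star_star, hε₀k]
      congr 1
      exact Finset.sum_congr rfl fun k _ => by ring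
    have hfactor : ∀ t e, star e = e → t * e * star t = r →
        h = borderLower s₀ w t * diagonal (Fin.snoc ε₀ e) * (borderLower s₀ w t)ᴴ :=
      fun t e he hte => hh.eq_borderLower_mul_diagonal_mul_conjTranspose hε₀star he hfac₀ hcol
        (by rw [hte]; ring)
    have hr0 : r ≠ 0 := fun hr0 => hminors (p + 1) le_rfl <| by
      change h.det = 0
      rw [hfactor 1 r hr (by simp)]
      simp [det_diagonal, Fin.prod_univ_castSucc, hr0]
    obtain ⟨t, e, ht, he, hte⟩ := Complex.exists_pos_mul_sign_mul_star_eq hr hr0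
    refine ⟨borderLower s₀ w t, Fin.snoc ε₀ e, hs₀.borderLower w ht, fun i => ?_,
      hfactor t e (star_eq_self_of_sign he) hte⟩
    induction i using Fin.lastCases with
    | last => simpa using he
    | cast i => simpa using hε₀ i

theorem hermitian_cholesky_signature_general (p : ℕ) (h : Matrix (Fin p) (Fin p) ℂ)
    (hherm : hᴴ = h)
    (hminors : ∀ (k : ℕ) (hk : k ≤ p),
      (h.submatrix (Fin.castLE hk) (Fin.castLE hk)).det ≠ 0) :
    ∃! sε : Matrix (Fin p) (Fin p) ℂ × (Fin p → ℂ),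
      LowerPos sε.1 ∧ (∀ i, sε.2 i = 1 ∨ sε.2 i = -1) ∧
      h = sε.1 * Matrix.diagonal sε.2 * sε.1ᴴ := by
  obtain ⟨s, ε, hs, hε, hfac⟩ := exists_lowerPos_mul_diagonal_mul_conjTranspose_eq hherm hminors
  refine ⟨(s, ε), ⟨hs, hε, hfac⟩, fun ⟨s', ε'⟩ ⟨hs', hε', hfac'⟩ => ?_⟩
  obtain ⟨rfl, rfl⟩ :=
    hs'.eq_of_mul_diagonal_mul_conjTranspose_eq hs hε' hε (hfac'.symm.trans hfac)
  rfl

/-- An invertible Hermitian matrix whose leading principal minors are all nonzero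
factors uniquely as `h = s ε sᴴ` with `s` lower triangular with positive real diagonal
and `ε` a diagonal matrix of signs `±1`. -/
theorem hermitian_cholesky_signature (p : ℕ) (h : Matrix (Fin p) (Fin p) ℂ)
    (hherm : hᴴ = h) (hinv : IsUnit h.det)
    (hminors : ∀ (k : ℕ) (hk : k ≤ p),
      (h.submatrix (Fin.castLE hk) (Fin.castLE hk)).det ≠ 0) :
    ∃! sε : Matrix (Fin p) (Fin p) ℂ × (Fin p → ℂ),
      LowerPos sε.1 ∧ (∀ i, sε.2 i = 1 ∨ sε.2 i = -1) ∧
      h = sε.1 * Matrix.diagonal sε.2 * sε.1ᴴ :=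
  hermitian_cholesky_signature_general p h hherm hminors
end

section
/- For every (n⁰,z⁰) in the Heisenberg group N, the operator T^ε(n⁰,z⁰) of the Gaussian realization is an isometry of L²(ℂ^{p×m}, γ): for every f ∈ L²(γ), the function T^ε(n⁰,z⁰)f lies in L²(γ) and has the same L²(γ)-norm as f. -/
open MeasureTheory

/-- The standard Gaussian probability measure on `ℂ^{p×m}` with density
`π^{-pm} exp(-tr(zz*))` with respect to Lebesgue measure. -/
noncomputable def gaussianPM (p m : ℕ) : Measure (Fin p → Fin m → ℂ) :=
  volume.withDensity fun z =>
    ENNReal.ofReal ((Real.pi ^ (p * m))⁻¹ *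
      Real.exp (-∑ i, ∑ j, Complex.normSq (z i j)))

/-- The operator `T^ε(n⁰,z⁰)` of the Gaussian realization:
`(T^ε(n⁰,z⁰)f)(z) = exp(tr(εn⁰) - (1/2)tr(z⁰z⁰*) - Σ_{i:ε_i=1} z_i z⁰_i* -
Σ_{i:ε_i=-1} z⁰_i z_i*) · f(z + z⁰)`. -/
noncomputable def TepsG {p m : ℕ} (ε : Fin p → ℂ) (n0 : Fin p → Fin p → ℂ)
    (z0 : Fin p → Fin m → ℂ) (f : (Fin p → Fin m → ℂ) → ℂ) :
    (Fin p → Fin m → ℂ) → ℂ :=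
  fun z =>
    Complex.exp ((∑ i, ε i * n0 i i)
        - (1/2 : ℂ) * ∑ i, ∑ j, z0 i j * (starRingEnd ℂ) (z0 i j)
        - ∑ i, if ε i = 1 then ∑ j, z i j * (starRingEnd ℂ) (z0 i j)
               else ∑ j, z0 i j * (starRingEnd ℂ) (z i j))
      * f (z + z0)

/-!
Write `T^ε(n⁰,z⁰) f (z) = exp A(z) · f(z + z⁰)` and let `γ` be the Gaussian density. Since
`tr(εn⁰)` is purely imaginary and both `z_i z⁰_i*` and `z⁰_i z_i*` have real part
`Re⟨z_i, z⁰_i⟩`, we get `-|z|² + 2 Re A(z) = -|z + z⁰|²`, i.e.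
`|exp A(z)|² γ(z) = γ(z + z⁰)`.
So `|T f|² γ` is the translate of `|f|² γ` by `z⁰`, and translation invariance of Lebesgue
measure gives the isometry.
-/

section WeightedTranslation

variable {G 𝕜 E : Type*} [MeasurableSpace G] [AddGroup G] [MeasurableAdd G]
  {ν : Measure G} [ν.IsAddRightInvariant]
  [NormedField 𝕜] [NormedAddCommGroup E] [NormedSpace 𝕜 E]
  {w : G → ENNReal} {c : G → 𝕜} {z₀ : G} {p : ENNReal}

theorem eLpNorm_smul_comp_add_right_withDensity (hw : AEMeasurable w ν)
    (hw_top : ∀ᵐ z ∂ν, w z < ⊤) (hp : p ≠ 0) (hp_top : p ≠ ⊤)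
    (hc : ∀ z, w z * ‖c z‖ₑ ^ p.toReal = w (z + z₀)) (f : G → E) :
    eLpNorm (fun z => c z • f (z + z₀)) p (ν.withDensity w) =
      eLpNorm f p (ν.withDensity w) := by
  have hpoint : ∀ z, w z * ‖c z • f (z + z₀)‖ₑ ^ p.toReal =
      w (z + z₀) * ‖f (z + z₀)‖ₑ ^ p.toReal := fun z => by
    rw [enorm_smul, ENNReal.mul_rpow_of_nonneg _ _ ENNReal.toReal_nonneg, ← mul_assoc, hc]
  simp only [eLpNorm_eq_lintegral_rpow_enorm_toReal hp hp_top,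
    lintegral_withDensity_eq_lintegral_mul_non_measurable₀ ν hw hw_top, Pi.mul_apply, hpoint,
    lintegral_add_right_eq_self (fun z => w z * ‖f z‖ₑ ^ p.toReal) z₀]

theorem MeasureTheory.MemLp.smul_comp_add_right_withDensity (hw : AEMeasurable w ν)
    (hw_top : ∀ᵐ z ∂ν, w z < ⊤) (hw_ne : ∀ᵐ z ∂ν, w z ≠ 0)
    (hc_meas : AEStronglyMeasurable c ν)
    (hc : ∀ z, w z * ‖c z‖ₑ ^ p.toReal = w (z + z₀)) {f : G → E}
    (hf : MemLp f p (ν.withDensity w)) (hp : p ≠ 0) (hp_top : p ≠ ⊤) :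
    MemLp (fun z => c z • f (z + z₀)) p (ν.withDensity w) := by
  have hfν : AEStronglyMeasurable f ν :=
    hf.1.mono_ac (withDensity_absolutelyContinuous' hw hw_ne)
  have htrans : AEStronglyMeasurable (fun z => f (z + z₀)) ν :=
    hfν.comp_quasiMeasurePreserving (measurePreserving_add_right ν z₀).quasiMeasurePreserving
  refine ⟨(hc_meas.smul htrans).mono_ac (withDensity_absolutelyContinuous ν w), ?_⟩
  rw [eLpNorm_smul_comp_add_right_withDensity hw hw_top hp hp_top hc]
  exact hf.2

end WeightedTranslation

namespace GaussianRealization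

variable {p m : ℕ}

noncomputable def frobeniusNormSq (z : Fin p → Fin m → ℂ) : ℝ :=
  ∑ i, ∑ j, Complex.normSq (z i j)

noncomputable def exponent (ε : Fin p → ℂ) (n0 : Fin p → Fin p → ℂ)
    (z0 z : Fin p → Fin m → ℂ) : ℂ :=
  (∑ i, ε i * n0 i i)
    - (1/2 : ℂ) * ∑ i, ∑ j, z0 i j * (starRingEnd ℂ) (z0 i j)
    - ∑ i, if ε i = 1 then ∑ j, z i j * (starRingEnd ℂ) (z0 i j)
           else ∑ j, z0 i j * (starRingEnd ℂ) (z i j)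

noncomputable def gaussianDensity (p m : ℕ) (z : Fin p → Fin m → ℂ) : ENNReal :=
  ENNReal.ofReal ((Real.pi ^ (p * m))⁻¹ * Real.exp (-frobeniusNormSq z))

theorem TepsG_eq_smul (ε : Fin p → ℂ) (n0 : Fin p → Fin p → ℂ)
    (z0 : Fin p → Fin m → ℂ) (f : (Fin p → Fin m → ℂ) → ℂ) :
    TepsG ε n0 z0 f = fun z => Complex.exp (exponent ε n0 z0 z) • f (z + z0) := rfl

theorem gaussianPM_eq_withDensity (p m : ℕ) :
    gaussianPM p m = volume.withDensity (gaussianDensity p m) := rfl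

theorem continuous_frobeniusNormSq :
    Continuous (frobeniusNormSq : (Fin p → Fin m → ℂ) → ℝ) := by
  unfold frobeniusNormSq
  fun_prop

theorem continuous_exponent (ε : Fin p → ℂ) (n0 : Fin p → Fin p → ℂ)
    (z0 : Fin p → Fin m → ℂ) :
    Continuous (exponent ε n0 z0) := by
  unfold exponent
  refine continuous_const.sub (continuous_finsetSum _ fun i _ => ?_)
  split_ifs <;> fun_prop

theorem measurable_gaussianDensity : Measurable (gaussianDensity p m) := by
  have hcont : Continuous fun z : Fin p → Fin m → ℂ =>
      (Real.pi ^ (p * m))⁻¹ * Real.exp (-frobeniusNormSq z) := by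
    have := continuous_frobeniusNormSq (p := p) (m := m)
    fun_prop
  exact hcont.measurable.ennreal_ofReal

theorem gaussianDensity_ne_zero (z : Fin p → Fin m → ℂ) : gaussianDensity p m z ≠ 0 := by
  have := Real.pi_pos
  exact (ENNReal.ofReal_pos.mpr (by positivity)).ne'

theorem frobeniusNormSq_add (z z0 : Fin p → Fin m → ℂ) :
    frobeniusNormSq (z + z0) = frobeniusNormSq z + frobeniusNormSq z0 +
      2 * ∑ i, ∑ j, (z i j * (starRingEnd ℂ) (z0 i j)).re := by
  simp only [frobeniusNormSq, Pi.add_apply, Complex.normSq_add, Finset.sum_add_distrib,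
    Finset.mul_sum]

theorem re_sum_mul_diag_eq_zero {ε : Fin p → ℂ} (hε : ∀ i, ε i = 1 ∨ ε i = -1)
    {n0 : Fin p → Fin p → ℂ} (hn0 : ∀ i j, (starRingEnd ℂ) (n0 j i) = -n0 i j) :
    (∑ i, ε i * n0 i i).re = 0 := by
  rw [Complex.re_sum]
  refine Finset.sum_eq_zero fun i _ => ?_
  have hre : (n0 i i).re = 0 := by
    have h := congrArg Complex.re (hn0 i i)
    simp only [Complex.conj_re, Complex.neg_re] at h
    linarith
  rcases hε i with h | h <;> simp [h, hre]

theorem sum_mul_conj_self (z : Fin p → Fin m → ℂ) :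
    ∑ i, ∑ j, z i j * (starRingEnd ℂ) (z i j) = (frobeniusNormSq z : ℂ) := by
  simp [Complex.mul_conj, frobeniusNormSq]

theorem re_exponent {ε : Fin p → ℂ} (hε : ∀ i, ε i = 1 ∨ ε i = -1)
    {n0 : Fin p → Fin p → ℂ} (hn0 : ∀ i j, (starRingEnd ℂ) (n0 j i) = -n0 i j)
    (z0 z : Fin p → Fin m → ℂ) :
    2 * (exponent ε n0 z0 z).re = frobeniusNormSq z - frobeniusNormSq (z + z0) := by
  have hcross : (∑ i, if ε i = 1 then ∑ j, z i j * (starRingEnd ℂ) (z0 i j)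
      else ∑ j, z0 i j * (starRingEnd ℂ) (z i j)).re
      = ∑ i, ∑ j, (z i j * (starRingEnd ℂ) (z0 i j)).re := by
    simp only [Complex.re_sum, apply_ite Complex.re]
    refine Finset.sum_congr rfl fun i _ => ?_
    split_ifs
    · rfl
    · refine Finset.sum_congr rfl fun j _ => ?_
      simp only [Complex.mul_re, Complex.conj_re, Complex.conj_im]
      ring
  rw [exponent, Complex.sub_re, Complex.sub_re, re_sum_mul_diag_eq_zero hε hn0,
    sum_mul_conj_self, hcross, frobeniusNormSq_add,
    show (1/2 : ℂ) * frobeniusNormSq z0 = ((frobeniusNormSq z0 / 2 : ℝ) : ℂ) by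
      push_cast; ring,
    Complex.ofReal_re]
  ring

theorem gaussianDensity_mul_enorm_exp_exponent {ε : Fin p → ℂ}
    (hε : ∀ i, ε i = 1 ∨ ε i = -1)
    {n0 : Fin p → Fin p → ℂ} (hn0 : ∀ i j, (starRingEnd ℂ) (n0 j i) = -n0 i j)
    (z0 z : Fin p → Fin m → ℂ) :
    gaussianDensity p m z * ‖Complex.exp (exponent ε n0 z0 z)‖ₑ ^ (2 : ℝ) =
      gaussianDensity p m (z + z0) := by
  rw [← ofReal_norm, Complex.norm_exp,
    ENNReal.ofReal_rpow_of_nonneg (Real.exp_nonneg _) two_pos.le, ← Real.exp_mul,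
    gaussianDensity, gaussianDensity, ← ENNReal.ofReal_mul (by positivity), mul_assoc,
    ← Real.exp_add, mul_comm _ (2 : ℝ), re_exponent hε hn0]
  ring_nf

end GaussianRealization

open GaussianRealization in
theorem TepsG_isometry_general (p q : ℕ)
    (ε : Fin p → ℂ) (hε : ∀ i, ε i = 1 ∨ ε i = -1)
    (n0 : Fin p → Fin p → ℂ) (hn0 : ∀ i j, (starRingEnd ℂ) (n0 j i) = -n0 i j)
    (z0 : Fin p → Fin (q - p) → ℂ)
    (f : (Fin p → Fin (q - p) → ℂ) → ℂ)
    (hf : MemLp f 2 (gaussianPM p (q - p))) :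
    MemLp (TepsG ε n0 z0 f) 2 (gaussianPM p (q - p)) ∧
    eLpNorm (TepsG ε n0 z0 f) 2 (gaussianPM p (q - p)) =
      eLpNorm f 2 (gaussianPM p (q - p)) := by
  have hw : AEMeasurable (gaussianDensity p (q - p)) volume :=
    measurable_gaussianDensity.aemeasurable
  have hw_top : ∀ᵐ z ∂volume, gaussianDensity p (q - p) z < ⊤ :=
    ae_of_all _ fun _ => ENNReal.ofReal_lt_top
  have hw_ne : ∀ᵐ z ∂volume, gaussianDensity p (q - p) z ≠ 0 :=
    ae_of_all _ gaussianDensity_ne_zero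
  have hc : ∀ z, gaussianDensity p (q - p) z * ‖Complex.exp (exponent ε n0 z0 z)‖ₑ ^
      (2 : ENNReal).toReal = gaussianDensity p (q - p) (z + z0) := by
    simpa using gaussianDensity_mul_enorm_exp_exponent hε hn0 z0
  have hc_meas : AEStronglyMeasurable (fun z => Complex.exp (exponent ε n0 z0 z)) volume :=
    (Complex.continuous_exp.comp (continuous_exponent ε n0 z0)).aestronglyMeasurable
  rw [gaussianPM_eq_withDensity] at hf
  rw [TepsG_eq_smul, gaussianPM_eq_withDensity]
  exact ⟨hf.smul_comp_add_right_withDensity hw hw_top hw_ne hc_meas hc two_ne_zero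
      ENNReal.ofNat_ne_top,
    eLpNorm_smul_comp_add_right_withDensity hw hw_top two_ne_zero ENNReal.ofNat_ne_top hc f⟩

/-- Each operator `T^ε(n⁰,z⁰)` of the Gaussian realization is an isometry of
`L²(ℂ^{p×m}, γ)`. -/
theorem TepsG_isometry (p q : ℕ) (hp : 1 ≤ p) (hpq : p ≤ q)
    (ε : Fin p → ℂ) (hε : ∀ i, ε i = 1 ∨ ε i = -1)
    (n0 : Fin p → Fin p → ℂ) (hn0 : ∀ i j, (starRingEnd ℂ) (n0 j i) = -n0 i j)
    (z0 : Fin p → Fin (q - p) → ℂ)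
    (f : (Fin p → Fin (q - p) → ℂ) → ℂ)
    (hf : MemLp f 2 (gaussianPM p (q - p))) :
    MemLp (TepsG ε n0 z0 f) 2 (gaussianPM p (q - p)) ∧
    eLpNorm (TepsG ε n0 z0 f) 2 (gaussianPM p (q - p)) =
      eLpNorm f 2 (gaussianPM p (q - p)) :=
  TepsG_isometry_general p q ε hε n0 hn0 z0 f hf
end

section
/- If f : ℂ^m → ℂ is holomorphic (entire) and integrable with respect to the standard Gaussian measure γ on ℂ^m, then ∫_{ℂ^m} f dγ = f(0). -/
open MeasureTheory

/-- The standard Gaussian probability measure on `ℂ^m` with density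
`π^{-m} exp(-|z|²)` with respect to Lebesgue measure. -/
noncomputable def gaussianC (m : ℕ) : Measure (Fin m → ℂ) :=
  volume.withDensity fun z =>
    ENNReal.ofReal ((Real.pi ^ m)⁻¹ * Real.exp (-∑ j, Complex.normSq (z j)))

/-!
In one variable, integrate in polar coordinates. The Gaussian weight is radial, so the circle of
radius `r` contributes `2πr` times the weight times the circle average of `g`, which for an entire
`g` is `g 0` by the mean value property; hence `∫ g dγ₁ = γ₁(ℂ) g 0 = g 0`. In `m + 1` variables,
`z ↦ (z 0, tail z)` carries `γ_{m+1}` to `γ₁ ⊗ γ_m`, and Fubini reduces the claim to the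
one-variable case in the first coordinate followed by the induction hypothesis at `Fin.cons 0 w`.
-/

open Set Real
open scoped ENNReal

variable {E : Type*} [NormedAddCommGroup E]

theorem integrableOn_comp_polarCoord_symm [NormedSpace ℝ E] {f : ℝ × ℝ → E}
    (hf : Integrable f) :
    IntegrableOn (fun p => p.1 • f (polarCoord.symm p)) polarCoord.target := by
  have hf' : IntegrableOn f (polarCoord.symm '' polarCoord.target) := hf.integrableOn
  rw [integrableOn_image_iff_integrableOn_abs_det_fderiv_smul volume
    polarCoord.open_target.measurableSet
    (fun p _ => (hasFDerivAt_polarCoord_symm p).hasFDerivWithinAt) polarCoord.symm.injOn] at hf'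
  refine hf'.congr_fun (fun p hp => ?_) polarCoord.open_target.measurableSet
  simp only [det_fderivPolarCoordSymm, abs_of_pos (show 0 < p.1 from hp.1)]

theorem Complex.integrableOn_comp_polarCoord_symm [NormedSpace ℝ E] {f : ℂ → E}
    (hf : Integrable f) :
    IntegrableOn (fun p => p.1 • f (Complex.polarCoord.symm p)) polarCoord.target :=
  _root_.integrableOn_comp_polarCoord_symm <|
    (Complex.volume_preserving_equiv_real_prod.symm.integrable_comp_emb
      Complex.measurableEquivRealProd.symm.measurableEmbedding).mpr hf

theorem Complex.polarCoord_symm_eq_circleMap (r θ : ℝ) :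
    Complex.polarCoord.symm (r, θ) = circleMap 0 r θ := by
  simp [circleMap, Complex.exp_mul_I, Complex.ofReal_cos, Complex.ofReal_sin]

theorem integral_Ioo_circleMap_eq_circleAverage [NormedSpace ℝ E] [CompleteSpace E] (f : ℂ → E)
    (r : ℝ) :
    ∫ θ in Ioo (-π) π, f (circleMap 0 r θ) = (2 * π) • circleAverage f 0 r := by
  rw [circleAverage_eq_integral_add (-π), smul_inv_smul₀ Real.two_pi_pos.ne',
    intervalIntegral.integral_comp_add_right (fun θ => f (circleMap 0 r θ)),
    intervalIntegral.integral_of_le (by linarith [Real.pi_pos]), integral_Ioc_eq_integral_Ioo]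
  ring_nf

theorem Complex.integral_eq_integral_Ioi_circleAverage [NormedSpace ℝ E] [CompleteSpace E]
    {f : ℂ → E} (hf : Integrable f) :
    ∫ z, f z = ∫ r in Ioi 0, (2 * π * r) • circleAverage f 0 r := by
  have hpolar := Complex.integrableOn_comp_polarCoord_symm hf
  rw [polarCoord_target, Measure.volume_eq_prod] at hpolar
  rw [← Complex.integral_comp_polarCoord_symm, polarCoord_target, Measure.volume_eq_prod,
    setIntegral_prod _ hpolar]
  refine setIntegral_congr_fun measurableSet_Ioi fun r _ => ?_
  simp only [Complex.polarCoord_symm_eq_circleMap]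
  rw [integral_smul, integral_Ioo_circleMap_eq_circleAverage, smul_smul, mul_comm r]

theorem Differentiable.integral_radial_smul [NormedSpace ℂ E] [CompleteSpace E] {φ : ℝ → ℝ}
    {g : ℂ → E} (hg : Differentiable ℂ g) (hφ : Integrable fun z : ℂ => φ ‖z‖)
    (hφg : Integrable fun z : ℂ => φ ‖z‖ • g z) :
    ∫ z, φ ‖z‖ • g z = (∫ z : ℂ, φ ‖z‖) • g 0 := by
  rw [Complex.integral_eq_integral_Ioi_circleAverage hφg,
    Complex.integral_eq_integral_Ioi_circleAverage hφ, ← integral_smul_const]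
  refine setIntegral_congr_fun measurableSet_Ioi fun r (hr : 0 < r) => ?_
  have hnorm : ∀ z ∈ Metric.sphere (0 : ℂ) |r|, ‖z‖ = r := fun z hz => by
    rw [mem_sphere_zero_iff_norm.mp hz, abs_of_pos hr]
  have hφg_avg : circleAverage (fun z => φ ‖z‖ • g z) 0 r = φ r • g 0 := by
    rw [circleAverage_congr_sphere (f₂ := fun z => φ r • g z)
      fun z hz => by simp only [hnorm z hz], circleAverage_fun_smul, hg.diffContOnCl.circleAverage]
  have hφ_avg : circleAverage (fun z => φ ‖z‖) 0 r = φ r := by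
    rw [circleAverage_congr_sphere (f₂ := fun _ => φ r) fun z hz => by simp only [hnorm z hz],
      circleAverage_const]
  rw [hφg_avg, hφ_avg, smul_assoc]

noncomputable def complexGaussian : Measure ℂ :=
  volume.withDensity fun z => ENNReal.ofReal (π⁻¹ * Real.exp (-Complex.normSq z))

theorem Complex.integral_inv_pi_mul_exp_neg_sq_norm :
    ∫ z : ℂ, π⁻¹ * Real.exp (-‖z‖ ^ 2) = 1 := by
  have h := GaussianFourier.integral_rexp_neg_mul_sq_norm (V := ℂ) one_pos
  simp only [neg_mul, one_mul, Complex.finrank_real_complex] at h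
  rw [integral_const_mul, h]
  norm_num [Real.pi_ne_zero]

theorem Differentiable.integral_complexGaussian [NormedSpace ℂ E] [CompleteSpace E] {g : ℂ → E}
    (hg : Differentiable ℂ g) (hint : Integrable g complexGaussian) :
    ∫ z, g z ∂complexGaussian = g 0 := by
  have hmeas : Measurable fun z : ℂ => ENNReal.ofReal (π⁻¹ * Real.exp (-Complex.normSq z)) := by
    fun_prop
  have hfin : ∀ᵐ z : ℂ, ENNReal.ofReal (π⁻¹ * Real.exp (-Complex.normSq z)) < ⊤ :=
    ae_of_all _ fun _ => ENNReal.ofReal_lt_top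
  have hdens : ∀ z : ℂ, (ENNReal.ofReal (π⁻¹ * Real.exp (-Complex.normSq z))).toReal
      = π⁻¹ * Real.exp (-‖z‖ ^ 2) := fun z => by
    rw [ENNReal.toReal_ofReal (by positivity), Complex.normSq_eq_norm_sq]
  rw [complexGaussian, integrable_withDensity_iff_integrable_smul' hmeas hfin] at hint
  rw [complexGaussian, integral_withDensity_eq_integral_toReal_smul hmeas hfin]
  simp only [hdens] at hint ⊢
  have hφ : Integrable fun z : ℂ => π⁻¹ * Real.exp (-‖z‖ ^ 2) :=
    .of_integral_ne_zero (by rw [Complex.integral_inv_pi_mul_exp_neg_sq_norm]; exact one_ne_zero)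
  rw [hg.integral_radial_smul (φ := fun r => π⁻¹ * Real.exp (-r ^ 2)) hφ hint,
    Complex.integral_inv_pi_mul_exp_neg_sq_norm, one_smul]

theorem MeasureTheory.MeasurePreserving.withDensity_comp {α β : Type*} [MeasurableSpace α]
    [MeasurableSpace β] {μ : Measure α} {ν : Measure β} {e : α → β}
    (he : MeasurePreserving e μ ν) (he' : MeasurableEmbedding e) (g : β → ℝ≥0∞) :
    MeasurePreserving e (μ.withDensity (g ∘ e)) (ν.withDensity g) := by
  refine ⟨he.measurable, Measure.ext fun s hs => ?_⟩
  rw [Measure.map_apply he.measurable hs, withDensity_apply _ hs,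
    withDensity_apply _ (he.measurable hs)]
  exact he.setLIntegral_comp_preimage_emb he' g s

theorem MeasurableEquiv.piFinSuccAbove_zero_symm_apply {n : ℕ} {α : Type*} [MeasurableSpace α]
    (p : α × (Fin n → α)) :
    (MeasurableEquiv.piFinSuccAbove (fun _ : Fin (n + 1) => α) 0).symm p = Fin.cons p.1 p.2 := by
  simp [MeasurableEquiv.piFinSuccAbove_symm_apply, Fin.insertNthEquiv, Fin.insertNth_zero']

theorem Differentiable.comp_finCons {𝕜 F : Type*} [NontriviallyNormedField 𝕜]
    [NormedAddCommGroup F] [NormedSpace 𝕜 F] {n : ℕ} {f : (Fin (n + 1) → 𝕜) → F}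
    (hf : Differentiable 𝕜 f) :
    Differentiable 𝕜 fun p : 𝕜 × (Fin n → 𝕜) => f (Fin.cons p.1 p.2) := by
  refine hf.comp (differentiable_pi.2 fun i => ?_)
  refine Fin.cases ?_ (fun j => ?_) i
  · simp only [Fin.cons_zero]
    fun_prop
  · simp only [Fin.cons_succ]
    fun_prop

instance (m : ℕ) : SFinite (gaussianC m) := by
  unfold gaussianC; infer_instance

instance : SFinite complexGaussian := by
  unfold complexGaussian; infer_instance

theorem gaussianC_zero : gaussianC 0 = Measure.dirac 0 := by
  simp only [gaussianC]
  simpa [volume_pi] using Measure.pi_of_empty _ _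

theorem measurePreserving_piFinSuccAbove_gaussianC (m : ℕ) :
    MeasurePreserving (MeasurableEquiv.piFinSuccAbove (fun _ : Fin (m + 1) => ℂ) 0)
      (gaussianC (m + 1)) (complexGaussian.prod (gaussianC m)) := by
  unfold gaussianC complexGaussian
  rw [prod_withDensity (by fun_prop) (by fun_prop), ← Measure.volume_eq_prod]
  have hdens : (fun z : Fin (m + 1) → ℂ =>
      ENNReal.ofReal ((π ^ (m + 1))⁻¹ * Real.exp (-∑ j, Complex.normSq (z j)))) =
      (fun p : ℂ × (Fin m → ℂ) => ENNReal.ofReal (π⁻¹ * Real.exp (-Complex.normSq p.1)) *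
        ENNReal.ofReal ((π ^ m)⁻¹ * Real.exp (-∑ j, Complex.normSq (p.2 j)))) ∘
      MeasurableEquiv.piFinSuccAbove (fun _ : Fin (m + 1) => ℂ) 0 := by
    funext z
    simp only [Function.comp_apply, MeasurableEquiv.piFinSuccAbove_apply, Fin.sum_univ_succ]
    rw [← ENNReal.ofReal_mul (by positivity)]
    congr 1
    simp only [pow_succ, mul_inv_rev, neg_add_rev, exp_add, Fin.insertNthEquiv_zero,
      Fin.consEquiv_symm_apply, Fin.tail]
    ring
  rw [hdens]
  exact (volume_preserving_piFinSuccAbove (fun _ : Fin (m + 1) => ℂ) 0).withDensity_comp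
    (MeasurableEquiv.measurableEmbedding _) _

/-- If `f : ℂ^m → ℂ` is entire and Gaussian-integrable, then `∫ f dγ = f 0`. -/
theorem integral_gaussian_of_holomorphic (m : ℕ) (f : (Fin m → ℂ) → ℂ)
    (hf : Differentiable ℂ f) (hint : Integrable f (gaussianC m)) :
    ∫ z, f z ∂(gaussianC m) = f 0 := by
  induction m with
  | zero => rw [gaussianC_zero, integral_dirac]
  | succ m ih =>
    have he := (measurePreserving_piFinSuccAbove_gaussianC m).symm
    have hF : Integrable (fun p : ℂ × (Fin m → ℂ) => f (Fin.cons p.1 p.2))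
        (complexGaussian.prod (gaussianC m)) := by
      simpa only [Function.comp_def, MeasurableEquiv.piFinSuccAbove_zero_symm_apply] using
        (he.integrable_comp_emb (MeasurableEquiv.measurableEmbedding _)).mpr hint
    have hinner : ∀ᵐ w ∂gaussianC m,
        ∫ a, f (Fin.cons a w) ∂complexGaussian = f (Fin.cons 0 w) := by
      filter_upwards [hF.prod_left_ae] with w hw
      exact (hf.comp_finCons.comp (differentiable_id.prodMk (differentiable_const w))
        ).integral_complexGaussian hw
    have houter := ih (fun w => f (Fin.cons 0 w))
      (hf.comp_finCons.comp ((differentiable_const 0).prodMk differentiable_id))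
      (hF.integral_prod_right.congr hinner)
    calc ∫ z, f z ∂gaussianC (m + 1)
        = ∫ w, ∫ a, f (Fin.cons a w) ∂complexGaussian ∂gaussianC m := by
          rw [← he.integral_comp', ← integral_prod_symm _ hF]
          simp_rw [MeasurableEquiv.piFinSuccAbove_zero_symm_apply]
      _ = ∫ w, f (Fin.cons 0 w) ∂gaussianC m := integral_congr_ae hinner
      _ = f 0 := houter.trans (congrArg f Matrix.cons_zero_zero)
end

section
/- Call a function f : ℂ^{p×m} → ℂ ε-holomorphic if the function z ↦ f(c_ε(z)) is holomorphic on ℂ^{p×m}, where c_ε replaces each entry in every row i with ε_i = -1 by its complex conjugate and leaves rows with ε_i = 1 unchanged. Then for every (n⁰,z⁰) in the Heisenberg group N, the operator T^ε(n⁰,z⁰) of the Gaussian realization maps ε-holomorphic functions to ε-holomorphic functions. -/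
/-- The conjugation map `c_ε` which replaces each entry in every row `i` with
`ε_i = -1` by its complex conjugate and leaves rows with `ε_i = 1` unchanged. -/
noncomputable def cEps {p m : ℕ} (ε : Fin p → ℂ) (z : Fin p → Fin m → ℂ) : Fin p → Fin m → ℂ :=
  fun i j => if ε i = 1 then z i j else (starRingEnd ℂ) (z i j)

/-!
Since `c_ε` is additive and involutive, translating by `z⁰` before `c_ε` is translating by
`c_ε z⁰` after it, so `f (· + z⁰)` stays `ε`-holomorphic. In the exponent, each row pairing is
ℂ-linear after composing with `c_ε`: rows with `ε_i = 1` are untouched and enter unconjugated,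
while in the other rows the conjugate of the conjugated entry is the entry itself.
-/

open ComplexConjugate

variable {p m : ℕ} (ε : Fin p → ℂ)

theorem cEps_add (z w : Fin p → Fin m → ℂ) : cEps ε (z + w) = cEps ε z + cEps ε w := by
  funext i j
  by_cases h : ε i = 1 <;> simp [cEps, h]

theorem cEps_cEps (z : Fin p → Fin m → ℂ) : cEps ε (cEps ε z) = z := by
  funext i j
  by_cases h : ε i = 1 <;> simp [cEps, h]

def IsEpsHolomorphic (f : (Fin p → Fin m → ℂ) → ℂ) : Prop :=
  Differentiable ℂ fun z => f (cEps ε z)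

theorem isEpsHolomorphic_sum_rowPairing (z0 : Fin p → Fin m → ℂ) :
    IsEpsHolomorphic ε fun z : Fin p → Fin m → ℂ =>
      ∑ i, if ε i = 1 then ∑ j, z i j * conj (z0 i j) else ∑ j, z0 i j * conj (z i j) := by
  refine Differentiable.fun_sum fun i _ => ?_
  by_cases h : ε i = 1 <;> simp only [cEps, h, if_true, if_false, Complex.conj_conj] <;> fun_prop

namespace IsEpsHolomorphic

variable {ε} {f g : (Fin p → Fin m → ℂ) → ℂ}

theorem comp_add_const (hf : IsEpsHolomorphic ε f) (z0 : Fin p → Fin m → ℂ) :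
    IsEpsHolomorphic ε fun z => f (z + z0) := by
  have htranslate : Differentiable ℂ fun z => f (cEps ε (z + cEps ε z0)) :=
    hf.comp (differentiable_id.add_const (cEps ε z0))
  simpa only [IsEpsHolomorphic, cEps_add, cEps_cEps] using htranslate

theorem const_sub (hf : IsEpsHolomorphic ε f) (c : ℂ) : IsEpsHolomorphic ε fun z => c - f z :=
  (differentiable_const c).sub hf

theorem cexp (hf : IsEpsHolomorphic ε f) : IsEpsHolomorphic ε fun z => Complex.exp (f z) :=
  Differentiable.cexp hf

theorem mul (hf : IsEpsHolomorphic ε f) (hg : IsEpsHolomorphic ε g) :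
    IsEpsHolomorphic ε fun z => f z * g z :=
  Differentiable.mul hf hg

end IsEpsHolomorphic

theorem TepsG_preserves_eps_holomorphic_general (p q : ℕ)
    (ε : Fin p → ℂ)
    (n0 : Fin p → Fin p → ℂ)
    (z0 : Fin p → Fin (q - p) → ℂ)
    (f : (Fin p → Fin (q - p) → ℂ) → ℂ)
    (hf : Differentiable ℂ fun z => f (cEps ε z)) :
    Differentiable ℂ fun z => TepsG ε n0 z0 f (cEps ε z) :=
  (((isEpsHolomorphic_sum_rowPairing ε z0).const_sub _).cexp).mul
    (IsEpsHolomorphic.comp_add_const hf z0)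

/-- A function `f` is `ε`-holomorphic if `z ↦ f (c_ε z)` is holomorphic. The operators
`T^ε(n⁰,z⁰)` of the Gaussian realization map `ε`-holomorphic functions to
`ε`-holomorphic functions. -/
theorem TepsG_preserves_eps_holomorphic (p q : ℕ) (hp : 1 ≤ p) (hpq : p ≤ q)
    (ε : Fin p → ℂ) (hε : ∀ i, ε i = 1 ∨ ε i = -1)
    (n0 : Fin p → Fin p → ℂ) (hn0 : ∀ i j, (starRingEnd ℂ) (n0 j i) = -n0 i j)
    (z0 : Fin p → Fin (q - p) → ℂ)
    (f : (Fin p → Fin (q - p) → ℂ) → ℂ)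
    (hf : Differentiable ℂ fun z => f (cEps ε z)) :
    Differentiable ℂ fun z => TepsG ε n0 z0 f (cEps ε z) :=
  TepsG_preserves_eps_holomorphic_general p q ε n0 z0 f hf
end

section
/- Let G be a group with subgroups P and K such that every g ∈ G factors uniquely as g = p·k (p ∈ P, k ∈ K). Let V be a complex vector space, T : P → GL(V) a group homomorphism, and β : P → V a 1-cocycle, i.e., β(p₁p₂) = T(p₁)(β(p₂)) + β(p₁) for all p₁, p₂ ∈ P, such that the family of vectors (β(p))_{p ∈ P, p ≠ 1} is linearly independent. Let L be the linear span of {β(p) : p ∈ P}. Then L is invariant under T(p) for every p ∈ P, and there exist a group homomorphism T̃ : G → GL(L) and a map β̃ : G → L such that T̃(p) agrees with T(p) on L for all p ∈ P, β̃(p·k) = β(p) for all p ∈ P and k ∈ K, and β̃(g₁g₂) = T̃(g₁)(β̃(g₂)) + β̃(g₁) for all g₁, g₂ ∈ G. -/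
/-! The cocycle lets `P` act on `V` by the affine maps `v ↦ T p v + β p`, which permute the orbit
`{β q}` of `0` by left multiplication, since `T p (β q) + β p = β (p * q)`. As `β 1 = 0` and the
other `β q` are linearly independent, every self-map `τ` of these points extends to a unique
affine map of their span `L`, with linear part `β q ↦ β (τ q) - β (τ 1)`. Identifying `P` with
`G ⧸ K` makes `G` act on `P`, extending left multiplication by `P`; the linear parts of the
resulting affine maps form the representation `T'` of `G` on `L`, and `g ↦ β (g • 1)` is its
cocycle. -/

open Submodule Set

section LinearPart

variable {G X R M : Type*} [CommRing R] [AddCommGroup M] [Module R M] {x₀ : X} {b : X → M}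

lemma span_range_ne_eq_span_range (hb₀ : b x₀ = 0) :
    span R (range fun x : {x // x ≠ x₀} => b x) = span R (range b) := by
  refine le_antisymm (span_mono (range_subset_iff.2 fun x => mem_range_self x.1)) (span_le.2 ?_)
  rintro _ ⟨x, rfl⟩
  by_cases hx : x = x₀
  · simp only [SetLike.mem_coe, hx, hb₀, zero_mem]
  · exact subset_span ⟨⟨x, hx⟩, rfl⟩

variable (R) in
def spanPoint (b : X → M) (x : X) : span R (range b) :=
  ⟨b x, subset_span (mem_range_self x)⟩

lemma spanPoint_eq_zero (hb₀ : b x₀ = 0) : spanPoint R b x₀ = 0 :=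
  Subtype.ext hb₀

noncomputable def spanBasisOfEqZero (hb₀ : b x₀ = 0)
    (hb : LinearIndependent R fun x : {x // x ≠ x₀} => b x) :
    Module.Basis {x // x ≠ x₀} R (span R (range b)) :=
  (Module.Basis.span hb).map (LinearEquiv.ofEq _ _ (span_range_ne_eq_span_range hb₀))

variable (hb₀ : b x₀ = 0) (hb : LinearIndependent R fun x : {x // x ≠ x₀} => b x)

lemma spanBasisOfEqZero_apply (x : {x // x ≠ x₀}) :
    spanBasisOfEqZero hb₀ hb x = spanPoint R b x := by
  ext
  simp [spanBasisOfEqZero, Module.Basis.span_apply, spanPoint]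

noncomputable def linearPart (τ : X → X) : span R (range b) →ₗ[R] span R (range b) :=
  (spanBasisOfEqZero hb₀ hb).constr R fun x => spanPoint R b (τ x) - spanPoint R b (τ x₀)

lemma linearPart_spanPoint (τ : X → X) (x : X) :
    linearPart hb₀ hb τ (spanPoint R b x) = spanPoint R b (τ x) - spanPoint R b (τ x₀) := by
  by_cases hx : x = x₀
  · rw [hx, spanPoint_eq_zero hb₀, map_zero, sub_self]
  · rw [linearPart, ← spanBasisOfEqZero_apply hb₀ hb ⟨x, hx⟩, Module.Basis.constr_basis]

lemma linearPart_id : linearPart hb₀ hb id = LinearMap.id :=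
  (spanBasisOfEqZero hb₀ hb).ext fun x => by
    simp [spanBasisOfEqZero_apply, linearPart_spanPoint, spanPoint_eq_zero hb₀]

lemma linearPart_comp (τ₁ τ₂ : X → X) :
    linearPart hb₀ hb (τ₁ ∘ τ₂) = linearPart hb₀ hb τ₁ ∘ₗ linearPart hb₀ hb τ₂ :=
  (spanBasisOfEqZero hb₀ hb).ext fun x => by
    simp only [spanBasisOfEqZero_apply, LinearMap.comp_apply, linearPart_spanPoint, map_sub,
      Function.comp_apply]
    abel

variable [Monoid G] (σ : G →* Equiv.Perm X)

noncomputable def linearPartRep : Representation R G (span R (range b)) where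
  toFun g := linearPart hb₀ hb (σ g)
  map_one' := by rw [map_one, Equiv.Perm.coe_one, linearPart_id]; rfl
  map_mul' g₁ g₂ := by rw [map_mul, Equiv.Perm.coe_mul, linearPart_comp]; rfl

lemma linearPartRep_spanPoint (g : G) (x : X) :
    linearPartRep hb₀ hb σ g (spanPoint R b x) = spanPoint R b (σ g x) - spanPoint R b (σ g x₀) :=
  linearPart_spanPoint hb₀ hb (σ g) x

lemma spanPoint_mul_apply (g₁ g₂ : G) :
    spanPoint R b (σ (g₁ * g₂) x₀) =
      linearPartRep hb₀ hb σ g₁ (spanPoint R b (σ g₂ x₀)) + spanPoint R b (σ g₁ x₀) := by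
  rw [linearPartRep_spanPoint, map_mul, Equiv.Perm.mul_apply, sub_add_cancel]

lemma coe_linearPartRep_apply {g : G} {A : M →ₗ[R] M}
    (hA : ∀ x, A (b x) = b (σ g x) - b (σ g x₀)) (v : span R (range b)) :
    (linearPartRep hb₀ hb σ g v : M) = A v := by
  have : (span R (range b)).subtype ∘ₗ linearPartRep hb₀ hb σ g =
      A ∘ₗ (span R (range b)).subtype :=
    (spanBasisOfEqZero hb₀ hb).ext fun x => by
      simp only [LinearMap.comp_apply, spanBasisOfEqZero_apply hb₀ hb, linearPartRep_spanPoint]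
      simp [hA, spanPoint]
  exact LinearMap.congr_fun this v

end LinearPart

section Complement

variable {G : Type*} [Group G] {P K : Subgroup G}

noncomputable def complementAction (hPK : P.IsComplement' K) : G →* Equiv.Perm P :=
  hPK.leftQuotientEquiv.permCongrHom.toMonoidHom.comp (MulAction.toPermHom G (G ⧸ K))

lemma complementAction_apply (hPK : P.IsComplement' K) {g : G} {q r : P} (k : K)
    (h : g * q = r * k) : complementAction hPK g q = r := by
  change hPK.leftQuotientEquiv (g • hPK.leftQuotientEquiv.symm q) = r
  rw [← Equiv.eq_symm_apply]
  change ((g * q : G) : G ⧸ K) = (r : G)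
  rw [h, QuotientGroup.mk_mul_of_mem _ k.2]

end Complement

/-- Let `G = P·K` with unique factorization, `T` a representation of `P` on a complex
vector space `V`, and `β` a 1-cocycle of `T` whose values at `p ≠ 1` are linearly
independent. Then the span `L` of the values of `β` is `T`-invariant, and both the
representation (restricted to `L`) and the cocycle extend to the whole group `G`. -/
theorem cocycle_representation_extension {G : Type*} [Group G] (P K : Subgroup G)
    (hfact : ∀ g : G, ∃! pk : P × K, g = (pk.1 : G) * (pk.2 : G))
    (V : Type*) [AddCommGroup V] [Module ℂ V]
    (T : P →* (V ≃ₗ[ℂ] V)) (β : P → V)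
    (hco : ∀ p₁ p₂ : P, β (p₁ * p₂) = T p₁ (β p₂) + β p₁)
    (hli : LinearIndependent ℂ fun p : {p : P // p ≠ 1} => β p.1) :
    (∀ p : P, ∀ v ∈ Submodule.span ℂ (Set.range β),
      T p v ∈ Submodule.span ℂ (Set.range β)) ∧
    ∃ (T' : G →* (↥(Submodule.span ℂ (Set.range β)) ≃ₗ[ℂ]
                  ↥(Submodule.span ℂ (Set.range β))))
      (β' : G → ↥(Submodule.span ℂ (Set.range β))),
      (∀ (p : P) (v : ↥(Submodule.span ℂ (Set.range β))),
        ((T' p) v : V) = T p (v : V)) ∧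
      (∀ (p : P) (k : K), ((β' ((p : G) * (k : G))) : V) = β p) ∧
      (∀ g₁ g₂ : G, β' (g₁ * g₂) = (T' g₁) (β' g₂) + β' g₁) := by
  have hPK : P.IsComplement' K := (Subgroup.isComplement_iff_bijective P K).2 <|
    (Function.bijective_iff_existsUnique _).2 fun g => by simpa only [eq_comm] using hfact g
  have hβ₁ : β 1 = 0 := by simpa using hco 1 1
  let ρ := linearPartRep hβ₁ hli (complementAction hPK)
  have hρT (p : P) : ∀ v, (ρ p v : V) = T p v := by
    refine coe_linearPartRep_apply hβ₁ hli _ fun q => ?_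
    rw [complementAction_apply hPK (r := p * q) 1 (by simp),
      complementAction_apply hPK (r := p) 1 (by simp), hco, add_sub_cancel_right,
      LinearEquiv.coe_coe]
  refine ⟨fun p v hv => hρT p ⟨v, hv⟩ ▸ (ρ p ⟨v, hv⟩).2,
    (LinearMap.GeneralLinearGroup.generalLinearEquiv ℂ _).toMonoidHom.comp ρ.asGroupHom,
    fun g => spanPoint ℂ β (complementAction hPK g 1), hρT, fun p k => ?_,
    spanPoint_mul_apply hβ₁ hli _⟩
  change (spanPoint ℂ β (complementAction hPK (p * k) 1) : V) = β p
  rw [complementAction_apply hPK (r := p) k (by simp)]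
  rfl
end
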